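/- (Michel time-change lemma) Let u, v be measurable controls with u(t) ∈ U and v(t) ≥ 1/2, and let (x, z) solve x' = v(t) f(x(t), u(t)), x(0) = b, z' = v(t), z(0) = 0 on [0, T]. Then there exists a measurable control u' with u'(t) ∈ U such that the solution x' of y' = f(y, u'(t)), y(0) = b satisfies x'(z(t)) = x(t) for all t ∈ [0, T], and ∫₀^T v(t) e^{−r z(t)} f₀(x(t), u(t)) dt = ∫₀^{z(T)} e^{−rt} f₀(x'(t), u'(t)) dt. -/

import Mathlib

/-!
Extend `v` beyond `[0, T]` by a positive constant and let `e` be its primitive; since `v ≥ 1/2`,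
`e` is an order isomorphism of `ℝ` extending `z`. The image of the measure `v dt` under `e` is
Lebesgue measure, and as `e` is a measurable equivalence this gives
`∫₀ᵗ v • g ∘ e = ∫₀^{e t} g` for every `g`, measurable or not. With `u' = u ∘ e⁻¹` and
`x' = x ∘ e⁻¹`, both the state equation and the cost identity are this substitution.
-/

open MeasureTheory Set Filter

theorem mul_sub_le_integral_of_le {φ : ℝ → ℝ} {a b c : ℝ}
    (hφ : IntervalIntegrable φ volume a b) (hφc : ∀ t, c ≤ φ t) (hab : a ≤ b) :
    c * (b - a) ≤ ∫ s in a..b, φ s :=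
  calc c * (b - a) = ∫ _ in a..b, c := by simp [mul_comm]
    _ ≤ ∫ s in a..b, φ s :=
      intervalIntegral.integral_mono_on hab intervalIntegrable_const hφ fun t _ => hφc t

theorem exists_orderIso_eq_primitive {φ : ℝ → ℝ} {c : ℝ}
    (hφ : ∀ a b, IntervalIntegrable φ volume a b) (hc : 0 < c) (hφc : ∀ t, c ≤ φ t) :
    ∃ e : ℝ ≃o ℝ, ∀ t, e t = ∫ s in 0..t, φ s := by
  set w : ℝ → ℝ := fun t => ∫ s in 0..t, φ s
  have hgrowth : ∀ a b, a ≤ b → c * (b - a) ≤ w b - w a := fun a b hab => by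
    rw [intervalIntegral.integral_interval_sub_left (hφ 0 b) (hφ 0 a)]
    exact mul_sub_le_integral_of_le (hφ a b) hφc hab
  have hw0 : w 0 = 0 := intervalIntegral.integral_same
  have hmono : StrictMono w := fun a b hab => by nlinarith [hgrowth a b hab.le]
  have hsurj : Function.Surjective w := by
    refine (intervalIntegral.continuous_primitive hφ 0).surjective ?_ ?_
    · refine tendsto_atTop_mono' atTop ((eventually_ge_atTop 0).mono fun t ht => ?_)
        (tendsto_id.const_mul_atTop hc)
      simpa [hw0] using hgrowth 0 t ht
    · refine tendsto_atBot_mono' atBot ((eventually_le_atBot 0).mono fun t ht => ?_)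
        (tendsto_id.const_mul_atBot hc)
      simpa [hw0] using hgrowth t 0 ht
  exact ⟨StrictMono.orderIsoOfSurjective w hmono hsurj, fun _ => rfl⟩

theorem map_withDensity_eq_volume_of_primitive {φ : ℝ → ℝ} (e : ℝ ≃o ℝ)
    (hφ : ∀ a b, IntervalIntegrable φ volume a b) (hφ0 : ∀ t, 0 ≤ φ t)
    (he : ∀ t, e t = ∫ s in 0..t, φ s) :
    (volume.withDensity fun s => ENNReal.ofReal (φ s)).map e = volume := by
  refine (Measure.ext_of_Ioc volume _ fun a b hab => ?_).symm
  have hle : e.symm a ≤ e.symm b := e.symm.monotone hab.le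
  rw [Measure.map_apply e.monotone.measurable measurableSet_Ioc, e.preimage_Ioc,
    withDensity_apply _ measurableSet_Ioc,
    ← ofReal_integral_eq_lintegral_ofReal (hφ _ _).1 (ae_of_all _ hφ0),
    ← intervalIntegral.integral_of_le hle,
    ← intervalIntegral.integral_interval_sub_left (hφ 0 _) (hφ 0 _), ← he, ← he,
    e.apply_symm_apply, e.apply_symm_apply, Real.volume_Ioc]

theorem integral_smul_comp_eq_of_primitive {E : Type*} [NormedAddCommGroup E]
    [NormedSpace ℝ E] {φ : ℝ → ℝ} (e : ℝ ≃o ℝ) (hφm : Measurable φ)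
    (hφ : ∀ a b, IntervalIntegrable φ volume a b) (hφ0 : ∀ t, 0 ≤ φ t)
    (he : ∀ t, e t = ∫ s in 0..t, φ s) (g : ℝ → E) (a b : ℝ) :
    ∫ s in a..b, φ s • g (e s) = ∫ σ in e a..e b, g σ := by
  set μ := volume.withDensity fun s => ENNReal.ofReal (φ s)
  let eₘ := e.toHomeomorph.toMeasurableEquiv
  have hmap : μ.map eₘ = volume := map_withDensity_eq_volume_of_primitive e hφ hφ0 he
  have hIoc : ∀ c d, ∫ s in Ioc c d, φ s • g (e s) = ∫ σ in Ioc (e c) (e d), g σ := by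
    intro c d
    calc ∫ s in Ioc c d, φ s • g (e s)
        = ∫ s in Ioc c d, g (e s) ∂μ := by
          rw [setIntegral_withDensity_eq_setIntegral_toReal_smul hφm.ennreal_ofReal
            (ae_of_all _ fun _ => ENNReal.ofReal_lt_top) _ measurableSet_Ioc]
          simp only [ENNReal.toReal_ofReal (hφ0 _)]
      _ = ∫ s in eₘ ⁻¹' Ioc (e c) (e d), g (eₘ s) ∂μ := by
          rw [show ⇑eₘ ⁻¹' Ioc (e c) (e d) = Ioc c d from e.toOrderEmbedding.preimage_Ioc c d]
          rfl
      _ = ∫ σ in Ioc (e c) (e d), g σ := by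
          rw [← integral_map_equiv, ← eₘ.restrict_map, hmap]
  simp only [intervalIntegral, hIoc]

theorem exists_intervalIntegrable_extension {v : ℝ → ℝ} {a b c : ℝ} (hv_meas : Measurable v)
    (hv : ∀ t ∈ Icc a b, c ≤ v t) (hint : IntegrableOn v (Icc a b)) :
    ∃ φ : ℝ → ℝ, Measurable φ ∧ (∀ t, c ≤ φ t) ∧
      (∀ a' b', IntervalIntegrable φ volume a' b') ∧ EqOn φ v (Icc a b) := by
  refine ⟨(Icc a b).indicator (v - fun _ => c) + fun _ => c, ?_, fun t => ?_, fun a' b' => ?_,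
    fun t ht => ?_⟩
  · exact ((hv_meas.sub measurable_const).indicator measurableSet_Icc).add measurable_const
  · by_cases ht : t ∈ Icc a b
    · simpa [ht] using hv t ht
    · simp [ht]
  · exact ((hint.sub (integrableOn_const measure_Icc_lt_top.ne)).integrable_indicator
      measurableSet_Icc).intervalIntegrable.add intervalIntegrable_const
  · simp [ht]

theorem exists_orderIso_timeChange {v : ℝ → ℝ} {c T : ℝ} (hc : 0 < c) (hv_meas : Measurable v)
    (hv : ∀ t ∈ Icc 0 T, c ≤ v t) (hint : IntegrableOn v (Icc 0 T)) :
    ∃ e : ℝ ≃o ℝ, (∀ t ∈ Icc 0 T, e t = ∫ s in 0..t, v s) ∧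
      ∀ {E : Type*} [NormedAddCommGroup E] [NormedSpace ℝ E] (g : ℝ → E), ∀ t ∈ Icc 0 T,
        ∫ s in 0..t, v s • g (e s) = ∫ σ in 0..e t, g σ := by
  obtain ⟨φ, hφm, hφc, hφ, hφv⟩ := exists_intervalIntegrable_extension hv_meas hv hint
  obtain ⟨e, he⟩ := exists_orderIso_eq_primitive hφ hc hφc
  have hφ0 : ∀ t, 0 ≤ φ t := fun t => hc.le.trans (hφc t)
  have he0 : e 0 = 0 := by rw [he, intervalIntegral.integral_same]
  have hsub : ∀ t ∈ Icc 0 T, uIcc 0 t ⊆ Icc 0 T := fun t ht =>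
    uIcc_subset_Icc ⟨le_rfl, ht.1.trans ht.2⟩ ht
  refine ⟨e, fun t ht => ?_, fun g t ht => ?_⟩
  · rw [he]
    exact intervalIntegral.integral_congr fun s hs => hφv (hsub t ht hs)
  · rw [← he0, ← integral_smul_comp_eq_of_primitive e hφm hφ hφ0 he g, he0]
    exact intervalIntegral.integral_congr fun s hs => by simp only [hφv (hsub t ht hs)]

theorem michel_time_change_general
    {m : ℕ} {Ucar : Type*} [MeasurableSpace Ucar]
    (U : Set Ucar)
    (f : EuclideanSpace ℝ (Fin m) → Ucar → EuclideanSpace ℝ (Fin m))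
    (f₀ : EuclideanSpace ℝ (Fin m) → Ucar → ℝ)
    (r : ℝ)
    (T : ℝ) (hT : 0 < T)
    (b : EuclideanSpace ℝ (Fin m))
    (u : ℝ → Ucar) (hu_meas : Measurable u) (hu_mem : ∀ t, u t ∈ U)
    (v : ℝ → ℝ) (hv_meas : Measurable v) (hv_ge : ∀ t, (1:ℝ)/2 ≤ v t)
    (hv_int : IntegrableOn v (Icc 0 T))
    (x : ℝ → EuclideanSpace ℝ (Fin m)) (z : ℝ → ℝ)
    (hx : ∀ t ∈ Icc 0 T, x t = b + ∫ s in (0:ℝ)..t, v s • f (x s) (u s))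
    (hz : ∀ t ∈ Icc 0 T, z t = ∫ s in (0:ℝ)..t, v s) :
    ∃ (u' : ℝ → Ucar) (x' : ℝ → EuclideanSpace ℝ (Fin m)),
      Measurable u' ∧ (∀ s, u' s ∈ U) ∧
      x' 0 = b ∧
      (∀ s ∈ Icc 0 (z T), x' s = b + ∫ σ in (0:ℝ)..s, f (x' σ) (u' σ)) ∧
      (∀ t ∈ Icc 0 T, x' (z t) = x t) ∧
      (∫ t in (0:ℝ)..T, v t * (Real.exp (-r * z t) * f₀ (x t) (u t)))
        = ∫ s in (0:ℝ)..(z T), Real.exp (-r * s) * f₀ (x' s) (u' s) := by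
  obtain ⟨e, hev, hcov⟩ := exists_orderIso_timeChange (by norm_num : (0 : ℝ) < 1 / 2)
    hv_meas (fun t _ => hv_ge t) hv_int
  have h0 : (0 : ℝ) ∈ Icc 0 T := left_mem_Icc.2 hT.le
  have hT' : T ∈ Icc 0 T := right_mem_Icc.2 hT.le
  have hze : ∀ t ∈ Icc 0 T, z t = e t := fun t ht => (hz t ht).trans (hev t ht).symm
  have hsymm0 : e.symm 0 = 0 := by
    rw [e.symm_apply_eq, hev 0 h0, intervalIntegral.integral_same]
  have hsymm : ∀ s ∈ Icc 0 (z T), e.symm s ∈ Icc 0 T := fun s hs => by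
    rw [hze T hT'] at hs
    exact ⟨hsymm0 ▸ e.symm.monotone hs.1, e.symm_apply_le.2 hs.2⟩
  refine ⟨u ∘ e.symm, x ∘ e.symm, hu_meas.comp e.symm.monotone.measurable, fun s => hu_mem _,
    ?_, fun s hs => ?_, fun t ht => ?_, ?_⟩
  · simp [hsymm0, hx 0 h0]
  · have hcov_s := hcov (fun σ => f ((x ∘ e.symm) σ) ((u ∘ e.symm) σ)) _ (hsymm s hs)
    rw [e.apply_symm_apply] at hcov_s
    rw [← hcov_s, Function.comp_apply, hx _ (hsymm s hs)]
    simp only [Function.comp_apply, e.symm_apply_apply]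
  · simp [hze t ht]
  · rw [hze T hT',
      ← hcov (fun σ => Real.exp (-r * σ) * f₀ ((x ∘ e.symm) σ) ((u ∘ e.symm) σ)) T hT']
    refine intervalIntegral.integral_congr fun s hs => ?_
    simp [hze s (uIcc_subset_Icc h0 hT' hs)]

/-- Michel time-change lemma: if `(x, z)` solves
`x' = v f(x,u)`, `x 0 = b`, `z' = v`, `z 0 = 0` (in integral form) on `[0,T]` with
measurable controls `u(t) ∈ U`, `v(t) ≥ 1/2`, then there is a measurable control `u'` with
values in `U` and a trajectory `x'` of `y' = f(y, u'(t))`, `y 0 = b`, with `x'(z t) = x t`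
on `[0,T]` and
`∫₀^T v(t) e^{−r z(t)} f₀(x t, u t) dt = ∫₀^{z T} e^{−rt} f₀(x' t, u' t) dt`. -/
theorem michel_time_change
    {m : ℕ} {Ucar : Type*} [MeasurableSpace Ucar]
    (U : Set Ucar)
    (f : EuclideanSpace ℝ (Fin m) → Ucar → EuclideanSpace ℝ (Fin m))
    (f₀ : EuclideanSpace ℝ (Fin m) → Ucar → ℝ)
    (r : ℝ) (hr : 0 ≤ r)
    (T : ℝ) (hT : 0 < T)
    (b : EuclideanSpace ℝ (Fin m))
    (u : ℝ → Ucar) (hu_meas : Measurable u) (hu_mem : ∀ t, u t ∈ U)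
    (v : ℝ → ℝ) (hv_meas : Measurable v) (hv_ge : ∀ t, (1:ℝ)/2 ≤ v t)
    (hv_int : IntegrableOn v (Icc 0 T))
    (x : ℝ → EuclideanSpace ℝ (Fin m)) (z : ℝ → ℝ)
    (hx : ∀ t ∈ Icc 0 T, x t = b + ∫ s in (0:ℝ)..t, v s • f (x s) (u s))
    (hz : ∀ t ∈ Icc 0 T, z t = ∫ s in (0:ℝ)..t, v s) :
    ∃ (u' : ℝ → Ucar) (x' : ℝ → EuclideanSpace ℝ (Fin m)),
      Measurable u' ∧ (∀ s, u' s ∈ U) ∧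
      x' 0 = b ∧
      (∀ s ∈ Icc 0 (z T), x' s = b + ∫ σ in (0:ℝ)..s, f (x' σ) (u' σ)) ∧
      (∀ t ∈ Icc 0 T, x' (z t) = x t) ∧
      (∫ t in (0:ℝ)..T, v t * (Real.exp (-r * z t) * f₀ (x t) (u t)))
        = ∫ s in (0:ℝ)..(z T), Real.exp (-r * s) * f₀ (x' s) (u' s) :=
  michel_time_change_general U f f₀ r T hT b u hu_meas hu_mem v hv_meas hv_ge hv_int x z hx hz
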